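/- arXiv:math/0609624 — 8 statements merged into one kernel-verified Lean document; each statement's English description precedes it below -/
import Mathlib

section
/- Let B be a finite set of points in the Euclidean plane ℝ² containing three non-collinear points. Then the Weber function W_B : ℝ² → ℝ defined by W_B(p) = ∑_{q ∈ B} ‖p − q‖ is strictly convex on ℝ². -/
/-!
By the triangle inequality each term `‖p - q‖` is convex, and in a strictly convex space it is
affine on the segment `[x, y]` only if `x - q` and `y - q` lie on the same ray, which forces `q`
onto the line through `x` and `y`. As `B` is not contained in a line, on every segment some
term is strictly convex, hence so is the sum.
-/

open Set

theorem smul_add_smul_sub_eq {R M : Type*} [CommRing R] [AddCommGroup M] [Module R M] {a b : R}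
    (hab : a + b = 1) (x y q : M) : a • x + b • y - q = a • (x - q) + b • (y - q) := by
  linear_combination (norm := module) hab • q

theorem collinear_of_subset_affineSpan_pair {k V P : Type*} [DivisionRing k] [AddCommGroup V]
    [Module k V] [AddTorsor V P] {s : Set P} {x y : P} (h : s ⊆ line[k, x, y]) :
    Collinear k s := by
  refine (collinear_iff_exists_forall_eq_smul_vadd s).2 ⟨x, y -ᵥ x, fun p hp => ?_⟩
  obtain ⟨r, rfl⟩ := mem_affineSpan_pair_iff_exists_lineMap_eq.1 (h hp)
  exact ⟨r, AffineMap.lineMap_apply x y r⟩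

section Affine

variable {R V P : Type*} [Field R] [LinearOrder R] [IsStrictOrderedRing R] [AddCommGroup V]
  [Module R V] [AddTorsor V P]

theorem mem_affineSpan_pair_of_sameRay_vsub {x y q : P} (hxy : x ≠ y)
    (h : SameRay R (x -ᵥ q) (y -ᵥ q)) : q ∈ line[R, x, y] := by
  have hcol : Collinear R ({q, x, y} : Set P) := by
    rcases wbtw_total_of_sameRay_vsub_left h with hw | hw
    · exact hw.collinear
    · simpa only [Set.pair_comm] using hw.collinear
  exact hcol.mem_affineSpan_of_mem_of_ne (by simp) (by simp) (by simp) hxy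

theorem exists_mem_not_sameRay_vsub_of_not_collinear {s : Set P} (hs : ¬ Collinear R s)
    {x y : P} (hxy : x ≠ y) : ∃ q ∈ s, ¬ SameRay R (x -ᵥ q) (y -ᵥ q) := by
  by_contra! h
  exact hs (collinear_of_subset_affineSpan_pair fun q hq =>
    mem_affineSpan_pair_of_sameRay_vsub hxy (h q hq))

end Affine

section Normed

variable {E : Type*} [NormedAddCommGroup E] [NormedSpace ℝ E]

theorem norm_smul_add_smul_sub_le {a b : ℝ} (ha : 0 ≤ a) (hb : 0 ≤ b) (hab : a + b = 1)
    (x y q : E) : ‖a • x + b • y - q‖ ≤ a * ‖x - q‖ + b * ‖y - q‖ := by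
  rw [smul_add_smul_sub_eq hab]
  calc ‖a • (x - q) + b • (y - q)‖ ≤ ‖a • (x - q)‖ + ‖b • (y - q)‖ := norm_add_le _ _
    _ = a * ‖x - q‖ + b * ‖y - q‖ := by
      rw [norm_smul_of_nonneg ha, norm_smul_of_nonneg hb]

theorem norm_smul_add_smul_sub_lt [StrictConvexSpace ℝ E] {a b : ℝ} (ha : 0 < a) (hb : 0 < b)
    (hab : a + b = 1) {x y q : E} (h : ¬ SameRay ℝ (x - q) (y - q)) :
    ‖a • x + b • y - q‖ < a * ‖x - q‖ + b * ‖y - q‖ := by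
  have hscaled : ¬ SameRay ℝ (a • (x - q)) (b • (y - q)) := fun hr => h <| by
    simpa [smul_smul, ha.ne', hb.ne'] using
      (hr.pos_smul_left (inv_pos.2 ha)).pos_smul_right (inv_pos.2 hb)
  rw [smul_add_smul_sub_eq hab]
  calc ‖a • (x - q) + b • (y - q)‖ < ‖a • (x - q)‖ + ‖b • (y - q)‖ :=
        norm_add_lt_of_not_sameRay hscaled
    _ = a * ‖x - q‖ + b * ‖y - q‖ := by
      rw [norm_smul_of_nonneg ha.le, norm_smul_of_nonneg hb.le]

theorem strictConvexOn_sum_norm_sub [StrictConvexSpace ℝ E] {B : Finset E}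
    (hB : ¬ Collinear ℝ (B : Set E)) : StrictConvexOn ℝ univ fun p => ∑ q ∈ B, ‖p - q‖ := by
  refine ⟨convex_univ, fun x _ y _ hxy a b ha hb hab => ?_⟩
  obtain ⟨q₀, hq₀, hnot⟩ := exists_mem_not_sameRay_vsub_of_not_collinear hB hxy
  calc ∑ q ∈ B, ‖a • x + b • y - q‖
      < ∑ q ∈ B, (a * ‖x - q‖ + b * ‖y - q‖) :=
        Finset.sum_lt_sum (fun q _ => norm_smul_add_smul_sub_le ha.le hb.le hab x y q)
          ⟨q₀, hq₀, norm_smul_add_smul_sub_lt ha hb hab hnot⟩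
    _ = a • ∑ q ∈ B, ‖x - q‖ + b • ∑ q ∈ B, ‖y - q‖ := by
      simp only [Finset.sum_add_distrib, Finset.mul_sum, smul_eq_mul]

end Normed

/-- If a finite set `B` of points in the Euclidean plane contains three
non-collinear points, then the Weber function `p ↦ ∑ q ∈ B, ‖p - q‖` is strictly convex
on `ℝ²`. -/
theorem weber_strictConvexOn (B : Finset (EuclideanSpace ℝ (Fin 2)))
    (h : ∃ a ∈ B, ∃ b ∈ B, ∃ c ∈ B,
      ¬ Collinear ℝ ({a, b, c} : Set (EuclideanSpace ℝ (Fin 2)))) :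
    StrictConvexOn ℝ Set.univ (fun p : EuclideanSpace ℝ (Fin 2) => ∑ q ∈ B, ‖p - q‖) := by
  obtain ⟨a, ha, b, hb, c, hc, habc⟩ := h
  refine strictConvexOn_sum_norm_sub fun hB => habc (hB.subset ?_)
  simp [Set.insert_subset_iff, ha, hb, hc]
end

section
/- Let B be a finite set of points in the Euclidean plane ℝ² containing three non-collinear points. Then the Weber function W_B(p) = ∑_{q ∈ B} ‖p − q‖ has exactly one global minimizer over ℝ² (the Fermat–Torricelli point of B). -/
/-- If a finite set `B` of points in the Euclidean plane contains three
non-collinear points, then the Weber function `p ↦ ∑ q ∈ B, ‖p - q‖` has exactly one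
global minimizer over `ℝ²` (the Fermat–Torricelli point of `B`). -/
theorem weber_existsUnique_minimizer (B : Finset (EuclideanSpace ℝ (Fin 2)))
    (h : ∃ a ∈ B, ∃ b ∈ B, ∃ c ∈ B,
      ¬ Collinear ℝ ({a, b, c} : Set (EuclideanSpace ℝ (Fin 2)))) :
    ∃! p : EuclideanSpace ℝ (Fin 2),
      ∀ y : EuclideanSpace ℝ (Fin 2), (∑ q ∈ B, ‖p - q‖) ≤ ∑ q ∈ B, ‖y - q‖ := by
  obtain ⟨a, ha, b, hb, c, hc, habc⟩ := h
  set f : EuclideanSpace ℝ (Fin 2) → ℝ := fun p => ∑ q ∈ B, ‖p - q‖ with hf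
  have hcont : Continuous f := by
    apply continuous_finset_sum
    intro q _
    exact (continuous_id.sub continuous_const).norm
  have hlb : ∀ p, ‖p‖ - ‖a‖ ≤ f p := by
    intro p
    have h1 : ‖p - a‖ ≤ f p :=
      Finset.single_le_sum (fun q _ => norm_nonneg _) ha
    have := norm_sub_norm_le p a
    linarith
  have htend : Filter.Tendsto f (Filter.cocompact _) Filter.atTop :=
    Filter.tendsto_atTop_mono hlb
      (Filter.tendsto_atTop_add_const_right _ _ tendsto_norm_cocompact_atTop)
  obtain ⟨p, hp⟩ := hcont.exists_forall_le htend
  refine ⟨p, hp, ?_⟩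
  intro p' hp'
  by_contra hne
  have hmin : f p' = f p := le_antisymm (hp' p) (hp p')
  set m : EuclideanSpace ℝ (Fin 2) := (2:ℝ)⁻¹ • (p + p') with hm
  have hmq : ∀ q : EuclideanSpace ℝ (Fin 2),
      m - q = (2:ℝ)⁻¹ • ((p - q) + (p' - q)) := by
    intro q; rw [hm]; module
  have hle : ∀ q ∈ B, ‖m - q‖ ≤ (‖p - q‖ + ‖p' - q‖) / 2 := by
    intro q _
    rw [hmq q, norm_smul]
    have := norm_add_le (p - q) (p' - q)
    simp only [norm_inv, Real.norm_ofNat]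
    rw [inv_mul_eq_div]
    linarith
  have hsum : ∑ q ∈ B, (‖p - q‖ + ‖p' - q‖) / 2 = f p := by
    rw [← Finset.sum_div, Finset.sum_add_distrib]
    rw [hf] at hmin ⊢
    simp only at hmin ⊢
    rw [hmin]; ring
  have hsumeq : ∑ q ∈ B, (‖p - q‖ + ‖p' - q‖) / 2 = ∑ q ∈ B, ‖m - q‖ := by
    have h1 : f p ≤ f m := hp m
    have h2 : f m ≤ ∑ q ∈ B, (‖p - q‖ + ‖p' - q‖) / 2 := Finset.sum_le_sum hle
    rw [hf] at h1 h2
    simp only at h1 h2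
    linarith
  have hterm : ∀ q ∈ B, ‖m - q‖ = (‖p - q‖ + ‖p' - q‖) / 2 :=
    (Finset.sum_eq_sum_iff_of_le hle).mp hsumeq.symm
  have hray : ∀ q ∈ B, SameRay ℝ (p - q) (p' - q) := by
    intro q hq
    apply sameRay_iff_norm_add.mpr
    have h1 := hterm q hq
    rw [hmq q, norm_smul] at h1
    simp only [norm_inv, Real.norm_ofNat] at h1
    linarith
  have hcol : Collinear ℝ (B : Set (EuclideanSpace ℝ (Fin 2))) := by
    rw [collinear_iff_exists_forall_eq_smul_vadd]
    refine ⟨p, p' - p, ?_⟩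
    intro q hq
    obtain ⟨u, α, β, hα, hβ, hαβ, h1, h2⟩ := (hray q hq).exists_eq_smul
    have hβα : β - α ≠ 0 := by
      intro h0
      apply hne
      have : p' - p = (β - α) • u := by
        rw [sub_smul, ← h1, ← h2]; abel
      rw [h0, zero_smul, sub_eq_zero] at this
      exact this
    refine ⟨-α / (β - α), ?_⟩
    have hup : p' - p = (β - α) • u := by
      rw [sub_smul, ← h1, ← h2]; abel
    have hs : (-α / (β - α)) * (β - α) = -α := by field_simp
    show q = (-α / (β - α)) • (p' - p) + p
    rw [hup, smul_smul, hs, neg_smul, ← h1]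
    abel
  exact habc (hcol.subset (by
    intro x hx
    simp only [Set.mem_insert_iff, Set.mem_singleton_iff] at hx
    rcases hx with rfl | rfl | rfl <;> simpa using ‹_›))
end

section
/- Let B be a finite set of points in the Euclidean plane ℝ² and let q₀ ∈ B. If ‖∑_{q ∈ B, q ≠ q₀} vers(q₀ − q)‖ ≤ 1, then q₀ is a global minimizer over ℝ² of the Weber function W_B(p) = ∑_{q ∈ B} ‖p − q‖. -/
open scoped Classical

/-- `vers v = v / ‖v‖` for `v ≠ 0`, and `vers 0 = 0`
(note `‖(0 : _)‖⁻¹ = 0` in `ℝ`, so the single formula covers both cases). -/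
noncomputable def vers (v : EuclideanSpace ℝ (Fin 2)) : EuclideanSpace ℝ (Fin 2) :=
  ‖v‖⁻¹ • v

/-!
The Weber function `W(p) = ∑ q ∈ B, ‖p - q‖` is a sum of norms, and `‖x‖⁻¹ • x` is a subgradient
of the norm at every `x` (at `x = 0` it is `0`). Summing the subgradient inequalities over
`q ≠ q₀` gives `W(p) ≥ W(q₀) + ⟪g, p - q₀⟫ + ‖p - q₀‖` with `g = ∑ q ≠ q₀, vers (q₀ - q)`,
and Cauchy–Schwarz with `‖g‖ ≤ 1` makes the last two terms nonnegative.
-/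

open Finset RealInnerProductSpace

section Weber

variable {E : Type*} [NormedAddCommGroup E] [InnerProductSpace ℝ E]

theorem norm_add_inner_inv_norm_smul_le (x y : E) : ‖x‖ + ⟪‖x‖⁻¹ • x, y⟫ ≤ ‖x + y‖ := by
  rcases eq_or_ne x 0 with rfl | hx
  · simp
  have hx' : ‖x‖ ≠ 0 := norm_ne_zero_iff.2 hx
  calc ‖x‖ + ⟪‖x‖⁻¹ • x, y⟫ = ⟪‖x‖⁻¹ • x, x + y⟫ := by
        rw [inner_add_right, real_inner_smul_left, real_inner_smul_left,
          real_inner_self_eq_norm_sq, sq, inv_mul_cancel_left₀ hx']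
    _ ≤ ‖‖x‖⁻¹ • x‖ * ‖x + y‖ := real_inner_le_norm _ _
    _ = ‖x + y‖ := by rw [norm_smul, norm_inv, norm_norm, inv_mul_cancel₀ hx', one_mul]

theorem sum_norm_sub_add_inner_le (s : Finset E) (a p : E) :
    ∑ q ∈ s, ‖a - q‖ + ⟪∑ q ∈ s, ‖a - q‖⁻¹ • (a - q), p - a⟫ ≤ ∑ q ∈ s, ‖p - q‖ := by
  rw [sum_inner, ← sum_add_distrib]
  refine sum_le_sum fun q _ => ?_
  simpa only [sub_add_sub_cancel'] using norm_add_inner_inv_norm_smul_le (a - q) (p - a)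

theorem sum_norm_sub_le_of_norm_sum_le_one [DecidableEq E] {B : Finset E} {a : E} (ha : a ∈ B)
    (h : ‖∑ q ∈ B.erase a, ‖a - q‖⁻¹ • (a - q)‖ ≤ 1) (p : E) :
    ∑ q ∈ B, ‖a - q‖ ≤ ∑ q ∈ B, ‖p - q‖ := by
  set g := ∑ q ∈ B.erase a, ‖a - q‖⁻¹ • (a - q)
  have hsub : ∑ q ∈ B.erase a, ‖a - q‖ + ⟪g, p - a⟫ ≤ ∑ q ∈ B.erase a, ‖p - q‖ :=
    sum_norm_sub_add_inner_le (B.erase a) a p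
  have hg : -‖p - a‖ ≤ ⟪g, p - a⟫ :=
    calc -‖p - a‖ ≤ -(‖g‖ * ‖p - a‖) := neg_le_neg (mul_le_of_le_one_left (norm_nonneg _) h)
      _ ≤ ⟪g, p - a⟫ := neg_le_of_abs_le (abs_real_inner_le_norm _ _)
  rw [← add_sum_erase B _ ha, ← add_sum_erase B _ ha, sub_self, norm_zero]
  linarith

end Weber

/-- Let `B` be a finite set of points in the plane and `q₀ ∈ B`.
If `‖∑_{q ∈ B, q ≠ q₀} vers (q₀ - q)‖ ≤ 1`, then `q₀` is a global minimizer of the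
Weber function of `B`. -/
theorem weber_min_of_absorbing (B : Finset (EuclideanSpace ℝ (Fin 2)))
    (q₀ : EuclideanSpace ℝ (Fin 2)) (hq₀ : q₀ ∈ B)
    (h : ‖∑ q ∈ B.erase q₀, vers (q₀ - q)‖ ≤ 1) :
    ∀ p : EuclideanSpace ℝ (Fin 2), (∑ q ∈ B, ‖q₀ - q‖) ≤ ∑ q ∈ B, ‖p - q‖ :=
  sum_norm_sub_le_of_norm_sum_le_one hq₀ h
end

section
/- Let p*, p, q be three pairwise distinct points in the Euclidean plane ℝ², let δ = ‖p − p*‖, let α be the (unoriented) angle between the vectors p − p* and q − p*, and let α' be the (unoriented) angle between the vectors p − p* and q − p. Then α' ≥ α and sin(α' − α) = δ sin(α) / ‖q − p‖. -/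
open InnerProductGeometry Real

/-!
With `u = p - pstar` and `v = q - pstar`, the side `q - p = v - u` satisfies `v = u + (v - u)`, so `v`
lies in the cone spanned by `u` and `v - u`; hence the angle from `u` to `v - u` splits as
`α + angle v (v - u)`. This is the exterior angle theorem, and the sine of the excess is given by the
law of sines in the triangle `pstar p q`.
-/

namespace InnerProductGeometry

variable {V : Type*} [NormedAddCommGroup V] [InnerProductSpace ℝ V]

theorem angle_sub_eq_angle_add_angle (x : V) {y : V} (hy : y ≠ 0) :
    angle x (y - x) = angle x y + angle y (y - x) := by
  refine angle_eq_angle_add_add_angle_add_of_mem_span hy ?_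
  have hx : x ∈ Submodule.span NNReal {x, y - x} := Submodule.subset_span (by simp)
  have hyx : y - x ∈ Submodule.span NNReal {x, y - x} := Submodule.subset_span (by simp)
  simpa using add_mem hx hyx

theorem sin_angle_sub_mul_norm_sub (x y : V) :
    Real.sin (angle y (y - x)) * ‖y - x‖ = Real.sin (angle x y) * ‖x‖ := by
  rw [sin_angle_mul_norm_eq_sin_angle_mul_norm x y, ← neg_sub y x, angle_neg_right, sin_pi_sub,
    norm_neg]

end InnerProductGeometry

theorem angle_shift_identity_general (pstar p q : EuclideanSpace ℝ (Fin 2))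
    (h₂ : pstar ≠ q) (h₃ : p ≠ q) :
    angle (p - pstar) (q - pstar) ≤ angle (p - pstar) (q - p) ∧
    Real.sin (angle (p - pstar) (q - p) - angle (p - pstar) (q - pstar)) =
      ‖p - pstar‖ * Real.sin (angle (p - pstar) (q - pstar)) / ‖q - p‖ := by
  have hside : q - p = (q - pstar) - (p - pstar) := (sub_sub_sub_cancel_right q p pstar).symm
  have hqp : ‖q - p‖ ≠ 0 := norm_ne_zero_iff.2 (sub_ne_zero.2 h₃.symm)
  rw [hside] at hqp ⊢
  rw [angle_sub_eq_angle_add_angle _ (sub_ne_zero.2 h₂.symm), add_sub_cancel_left]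
  refine ⟨le_add_of_nonneg_right (angle_nonneg _ _), ?_⟩
  rw [eq_div_iff hqp, sin_angle_sub_mul_norm_sub, mul_comm]

/-- Let `pstar`, `p`, `q` be pairwise distinct points in the Euclidean plane,
`δ = ‖p - pstar‖`, `α` the unoriented angle between `p - pstar` and `q - pstar`, and `α'` the
unoriented angle between `p - pstar` and `q - p`. Then `α' ≥ α` and
`sin (α' - α) = δ sin α / ‖q - p‖`. -/
theorem angle_shift_identity (pstar p q : EuclideanSpace ℝ (Fin 2))
    (h₁ : pstar ≠ p) (h₂ : pstar ≠ q) (h₃ : p ≠ q) :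
    angle (p - pstar) (q - pstar) ≤ angle (p - pstar) (q - p) ∧
    Real.sin (angle (p - pstar) (q - p) - angle (p - pstar) (q - pstar)) =
      ‖p - pstar‖ * Real.sin (angle (p - pstar) (q - pstar)) / ‖q - p‖ :=
  angle_shift_identity_general pstar p q h₂ h₃
end

section
/- Let Q ⊂ ℝ² be a compact set, let B ⊆ Q be a finite set of points, and let p* ∈ ℝ² be a global minimizer of the Weber function W_B(p) = ∑_{q ∈ B} ‖p − q‖. Let p ∈ C(B) = {p ∈ ℝ² : ‖∑_{q ∈ B} vers(p − q)‖ ≤ 1} with p ≠ p*, and set δ = ‖p − p*‖. Fix α_min ∈ (0, π/2) and let B_{α_min} be the set of points q ∈ B \ {p*, p} such that the unoriented angle α_q between p − p* and q − p* satisfies sin(α_q) ≥ sin(α_min). If card(B_{α_min}) · sin²(α_min) > 2, then δ ≤ 2 · diam(Q) / (card(B_{α_min}) · sin²(α_min) − 2). -/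
open InnerProductGeometry Real

/-!
Put `v = p - pstar` and `δ = ‖v‖`. By convexity of the norm, the gap `g_q` between `‖p - q‖` and
its first-order expansion at `pstar` along `v` (using the one-sided derivative, which is `δ` when
`q = pstar`) is nonnegative. Summed over `B`, the gaps are at most `W_B(p) - W_B(pstar)`, since the
one-sided derivative of `W_B` at its minimizer is nonnegative, and `W_B(p) - W_B(pstar)` is at most
`⟪∑ vers (p - q), v⟫ ≤ δ` since `p ∈ C(B)`. Conversely, for `q ≠ pstar` the law of cosines gives
`g_q · (‖p - q‖ + ‖pstar - q‖ - δ cos α_q) = δ² sin² α_q`, and the second factor is at most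
`2 (diam Q + δ)` because the minimizer lies in the convex hull of `B ⊆ Q`. Summing over
`B_{αmin}` gives `card · δ² sin² αmin ≤ 2 (diam Q + δ) δ`.
-/

open RealInnerProductSpace Set

section InnerProductSpace

variable {E : Type*} [NormedAddCommGroup E] [InnerProductSpace ℝ E]

open Classical in
noncomputable def normDirDeriv (x v : E) : ℝ :=
  if x = 0 then ‖v‖ else ⟪x, v⟫ / ‖x‖

noncomputable def normGap (x v : E) : ℝ :=
  ‖x + v‖ - ‖x‖ - normDirDeriv x v

theorem hasDerivWithinAt_norm_add_smul (x v : E) :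
    HasDerivWithinAt (fun t : ℝ => ‖x + t • v‖) (normDirDeriv x v) (Ici 0) 0 := by
  rcases eq_or_ne x 0 with rfl | hx
  · rw [normDirDeriv, if_pos rfl]
    refine (hasDerivAt_mul_const ‖v‖).hasDerivWithinAt.congr (fun t ht => ?_) (by simp)
    rw [zero_add, norm_smul, Real.norm_of_nonneg ht]
  · have hsq : HasDerivAt (fun t : ℝ => ‖x + t • v‖ ^ 2) (2 * ⟪x, v⟫) 0 := by
      simpa using ((hasDerivAt_id (0 : ℝ)).smul_const v).const_add x |>.norm_sq
    have hsqrt := hsq.sqrt (by simpa using hx)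
    simp only [Real.sqrt_sq (norm_nonneg _), zero_smul, add_zero] at hsqrt
    rw [normDirDeriv, if_neg hx]
    exact (hsqrt.congr_deriv (mul_div_mul_left _ _ two_ne_zero)).hasDerivWithinAt

theorem normGap_nonneg (x v : E) : 0 ≤ normGap x v := by
  rw [normGap, sub_nonneg]
  rcases eq_or_ne x 0 with rfl | hx
  · simp [normDirDeriv]
  · have hx' : 0 < ‖x‖ := norm_pos_iff.mpr hx
    have hcs : ⟪x, x + v⟫ ≤ ‖x‖ * ‖x + v‖ := real_inner_le_norm _ _
    rw [inner_add_right, real_inner_self_eq_norm_sq] at hcs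
    rw [normDirDeriv, if_neg hx, div_le_iff₀ hx']
    nlinarith

theorem norm_add_sub_norm_le_inner (x v : E) : ‖x + v‖ - ‖x‖ ≤ ⟪‖x + v‖⁻¹ • (x + v), v⟫ := by
  set y := x + v
  rcases eq_or_ne y 0 with hy | hy
  · simp [hy]
  have hy' : 0 < ‖y‖ := norm_pos_iff.mpr hy
  have hcs : ⟪y, x⟫ ≤ ‖y‖ * ‖x‖ := real_inner_le_norm _ _
  have hv : v = y - x := by simp [y]
  rw [real_inner_smul_left, hv, inner_sub_right, real_inner_self_eq_norm_sq, ← div_eq_inv_mul,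
    le_div_iff₀ hy']
  nlinarith

theorem norm_sq_mul_sin_angle_sq_le_normGap (x v : E) (hx : x ≠ 0) :
    ‖v‖ ^ 2 * sin (angle x v) ^ 2 ≤ 2 * (‖x‖ + ‖v‖) * normGap x v := by
  have hgap := normGap_nonneg x v
  rw [normGap, normDirDeriv, if_neg hx] at hgap ⊢
  set d := ‖x‖
  set e := ‖x + v‖
  set δ := ‖v‖
  set i := ⟪x, v⟫
  have hd : 0 < d := norm_pos_iff.mpr hx
  have hsin : (sin (angle x v) * (d * δ)) ^ 2 = d ^ 2 * δ ^ 2 - i ^ 2 := by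
    rw [sin_angle_mul_norm_mul_norm, real_inner_self_eq_norm_sq, real_inner_self_eq_norm_sq,
      Real.sq_sqrt]
    · ring
    · nlinarith [abs_real_inner_le_norm x v, abs_nonneg i, sq_abs i]
  have he : e ^ 2 = d ^ 2 + 2 * i + δ ^ 2 := norm_add_sq_real x v
  have hi : i / d ≤ δ := by rw [div_le_iff₀ hd]; linarith [real_inner_le_norm x v]
  have heδ : e ≤ d + δ := norm_add_le x v
  have hfactor : δ ^ 2 * sin (angle x v) ^ 2 = (e - d - i / d) * (e + d + i / d) := by
    field_simp
    linear_combination hsin - d ^ 2 * he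
  rw [hfactor, mul_comm]
  exact mul_le_mul_of_nonneg_right (by linarith) hgap

def weber (B : Finset E) (p : E) : ℝ := ∑ q ∈ B, ‖p - q‖

theorem exists_forall_norm_sub_lt_of_notMem {K : Set E} (hne : K.Nonempty) (hK : IsComplete K)
    (hconv : Convex ℝ K) {p : E} (hp : p ∉ K) : ∃ r, ∀ q ∈ K, ‖r - q‖ < ‖p - q‖ := by
  obtain ⟨r, hrK, hr⟩ := exists_norm_eq_iInf_of_complete_convex hne hK hconv p
  have hproj := (norm_eq_iInf_iff_real_inner_le_zero hconv hrK).1 hr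
  have hpr : 0 < ‖p - r‖ := norm_pos_iff.mpr (sub_ne_zero.mpr fun h => hp (h ▸ hrK))
  refine ⟨r, fun q hq => ?_⟩
  have hobtuse : ⟪p - r, q - r⟫ ≤ 0 := hproj q hq
  have hsplit : ‖p - q‖ ^ 2 = ‖p - r‖ ^ 2 + ‖r - q‖ ^ 2 - 2 * ⟪p - r, q - r⟫ := by
    rw [← sub_add_sub_cancel p r q, norm_add_sq_real, ← neg_sub q r, inner_neg_right]
    ring
  nlinarith [norm_nonneg (r - q), norm_nonneg (p - q)]

theorem mem_convexHull_of_forall_weber_le {B : Finset E} (hB : B.Nonempty) {p : E}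
    (hmin : ∀ y, weber B p ≤ weber B y) : p ∈ convexHull ℝ (B : Set E) := by
  by_contra hp
  obtain ⟨r, hr⟩ := exists_forall_norm_sub_lt_of_notMem
    ((Finset.coe_nonempty.mpr hB).mono (subset_convexHull ℝ _))
    (B.finite_toSet.isCompact_convexHull ℝ).isComplete (convex_convexHull ℝ _) hp
  have hlt : weber B r < weber B p :=
    Finset.sum_lt_sum_of_nonempty hB fun q hq => hr q (subset_convexHull ℝ _ hq)
  exact (hmin r).not_gt hlt

theorem norm_sub_le_diam_of_forall_weber_le {Q : Set E} (hQ : Bornology.IsBounded Q)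
    {B : Finset E} (hBQ : (B : Set E) ⊆ Q) {p : E} (hmin : ∀ y, weber B p ≤ weber B y)
    {q : E} (hq : q ∈ B) : ‖p - q‖ ≤ Metric.diam Q := by
  have hp : p ∈ convexHull ℝ Q :=
    convexHull_mono hBQ (mem_convexHull_of_forall_weber_le ⟨q, hq⟩ hmin)
  rw [← dist_eq_norm, ← convexHull_diam]
  exact Metric.dist_le_diam_of_mem (isBounded_convexHull.2 hQ) hp (subset_convexHull ℝ Q (hBQ hq))

theorem sum_normDirDeriv_nonneg_of_forall_weber_le {B : Finset E} {p : E}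
    (hmin : ∀ y, weber B p ≤ weber B y) (v : E) : 0 ≤ ∑ q ∈ B, normDirDeriv (p - q) v := by
  have hderiv : HasDerivWithinAt (fun t : ℝ => weber B (p + t • v))
      (∑ q ∈ B, normDirDeriv (p - q) v) (Ici 0) 0 := by
    refine (HasDerivWithinAt.fun_sum fun q _ => hasDerivWithinAt_norm_add_smul (p - q) v)
      |>.congr_of_mem (fun t _ => ?_) self_mem_Ici
    simp only [weber, sub_add_eq_add_sub]
  have hlocmin : IsLocalMinOn (fun t : ℝ => weber B (p + t • v)) (Ici 0) 0 :=
    Filter.Eventually.of_forall fun t => by simpa using hmin (p + t • v)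
  have hone : (1 : ℝ) ∈ posTangentConeAt (Ici 0) 0 :=
    mem_posTangentConeAt_of_segment_subset (by simpa [segment_eq_Icc] using Icc_subset_Ici_self)
  simpa using hlocmin.hasFDerivWithinAt_nonneg hderiv.hasFDerivWithinAt hone

theorem sum_normGap_le_of_forall_weber_le {B : Finset E} {pstar : E}
    (hmin : ∀ y, weber B pstar ≤ weber B y) (p : E) :
    ∑ q ∈ B, normGap (pstar - q) (p - pstar) ≤ ⟪∑ q ∈ B, ‖p - q‖⁻¹ • (p - q), p - pstar⟫ := by
  have hderiv := sum_normDirDeriv_nonneg_of_forall_weber_le hmin (p - pstar)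
  simp only [normGap, Finset.sum_sub_distrib, sub_add_sub_cancel']
  have hsub : ∑ q ∈ B, (‖p - q‖ - ‖pstar - q‖) ≤ ⟪∑ q ∈ B, ‖p - q‖⁻¹ • (p - q), p - pstar⟫ := by
    rw [sum_inner]
    refine Finset.sum_le_sum fun q _ => ?_
    simpa [sub_add_sub_cancel'] using norm_add_sub_norm_le_inner (pstar - q) (p - pstar)
  rw [Finset.sum_sub_distrib] at hsub
  linarith

theorem norm_sq_mul_sin_angle_sq_le_normGap_of_forall_weber_le {Q : Set E}
    (hQ : Bornology.IsBounded Q) {B : Finset E} (hBQ : (B : Set E) ⊆ Q) {pstar : E}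
    (hmin : ∀ y, weber B pstar ≤ weber B y) (p : E) {q : E} (hq : q ∈ B) (hqpstar : q ≠ pstar) :
    ‖p - pstar‖ ^ 2 * sin (angle (p - pstar) (q - pstar)) ^ 2 ≤
      2 * (Metric.diam Q + ‖p - pstar‖) * normGap (pstar - q) (p - pstar) := by
  have hangle : sin (angle (p - pstar) (q - pstar)) = sin (angle (pstar - q) (p - pstar)) := by
    rw [angle_comm, ← neg_sub pstar q, angle_neg_left, sin_pi_sub]
  rw [hangle]
  refine (norm_sq_mul_sin_angle_sq_le_normGap _ _ (sub_ne_zero.2 hqpstar.symm)).trans ?_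
  have hD := norm_sub_le_diam_of_forall_weber_le hQ hBQ hmin hq
  gcongr
  exact normGap_nonneg _ _

end InnerProductSpace

theorem sum_normGap_le_norm_of_norm_sum_vers_le {B : Finset (EuclideanSpace ℝ (Fin 2))}
    {pstar : EuclideanSpace ℝ (Fin 2)} (hmin : ∀ y, weber B pstar ≤ weber B y)
    {p : EuclideanSpace ℝ (Fin 2)} (hpC : ‖∑ q ∈ B, vers (p - q)‖ ≤ 1) :
    ∑ q ∈ B, normGap (pstar - q) (p - pstar) ≤ ‖p - pstar‖ :=
  calc ∑ q ∈ B, normGap (pstar - q) (p - pstar) ≤ ⟪∑ q ∈ B, vers (p - q), p - pstar⟫ :=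
        sum_normGap_le_of_forall_weber_le hmin p
    _ ≤ ‖∑ q ∈ B, vers (p - q)‖ * ‖p - pstar‖ := real_inner_le_norm _ _
    _ ≤ ‖p - pstar‖ := mul_le_of_le_one_left (norm_nonneg _) hpC

theorem solution_set_diameter_bound_general (Q : Set (EuclideanSpace ℝ (Fin 2))) (hQ : IsCompact Q)
    (B : Finset (EuclideanSpace ℝ (Fin 2))) (hBQ : (B : Set (EuclideanSpace ℝ (Fin 2))) ⊆ Q)
    (pstar : EuclideanSpace ℝ (Fin 2))
    (hmin : ∀ y : EuclideanSpace ℝ (Fin 2), (∑ q ∈ B, ‖pstar - q‖) ≤ ∑ q ∈ B, ‖y - q‖)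
    (p : EuclideanSpace ℝ (Fin 2)) (hpC : ‖∑ q ∈ B, vers (p - q)‖ ≤ 1)
    (αmin : ℝ) (hαmin : αmin ∈ Set.Ioo 0 (π / 2))
    (B' : Finset (EuclideanSpace ℝ (Fin 2)))
    (hB' : ∀ q : EuclideanSpace ℝ (Fin 2), q ∈ B' ↔
      q ∈ B ∧ q ≠ pstar ∧ q ≠ p ∧
        Real.sin αmin ≤ Real.sin (angle (p - pstar) (q - pstar)))
    (hcard : 2 < (B'.card : ℝ) * Real.sin αmin ^ 2) :
    ‖p - pstar‖ ≤ 2 * Metric.diam Q / ((B'.card : ℝ) * Real.sin αmin ^ 2 - 2) := by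
  set δ := ‖p - pstar‖
  set D := Metric.diam Q
  set gap := fun q => normGap (pstar - q) (p - pstar)
  have hD : 0 ≤ D := Metric.diam_nonneg
  have hsin : 0 ≤ sin αmin :=
    (sin_pos_of_pos_of_lt_pi hαmin.1 (hαmin.2.trans (half_lt_self pi_pos))).le
  have hgap_ge (q) (hq : q ∈ B') : δ ^ 2 * sin αmin ^ 2 ≤ 2 * (D + δ) * gap q := by
    obtain ⟨hqB, hqpstar, -, hαq⟩ := (hB' q).1 hq
    refine le_trans ?_ (norm_sq_mul_sin_angle_sq_le_normGap_of_forall_weber_le hQ.isBounded hBQ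
      hmin p hqB hqpstar)
    gcongr
  have hcount : (B'.card : ℝ) * (δ ^ 2 * sin αmin ^ 2) ≤ 2 * (D + δ) * δ :=
    calc (B'.card : ℝ) * (δ ^ 2 * sin αmin ^ 2) ≤ ∑ q ∈ B', 2 * (D + δ) * gap q := by
          simpa using Finset.card_nsmul_le_sum B' _ _ hgap_ge
      _ ≤ ∑ q ∈ B, 2 * (D + δ) * gap q :=
          Finset.sum_le_sum_of_subset_of_nonneg (fun q hq => ((hB' q).1 hq).1)
            fun q _ _ => mul_nonneg (by positivity) (normGap_nonneg _ _)
      _ ≤ 2 * (D + δ) * δ := by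
          rw [← Finset.mul_sum]
          gcongr
          exact sum_normGap_le_norm_of_norm_sum_vers_le hmin hpC
  have hδ : 0 ≤ δ := norm_nonneg _
  rw [le_div_iff₀ (by linarith)]
  rcases hδ.eq_or_lt with hδ0 | hδpos
  · rw [← hδ0, zero_mul]; positivity
  · nlinarith

/-- Let `Q ⊂ ℝ²` be compact, `B ⊆ Q` finite, and `pstar` a global minimizer
of the Weber function of `B`. Let `p ∈ C(B) = {p : ‖∑ q ∈ B, vers (p - q)‖ ≤ 1}`, `p ≠ pstar`,
`δ = ‖p - pstar‖`. Fix `αmin ∈ (0, π/2)` and let `B'` consist of the points `q ∈ B \ {pstar, p}`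
whose unoriented angle `α_q` between `p - pstar` and `q - pstar` satisfies
`sin α_q ≥ sin αmin`. If `card B' · sin² αmin > 2`, then
`δ ≤ 2 diam Q / (card B' · sin² αmin - 2)`. -/
theorem solution_set_diameter_bound (Q : Set (EuclideanSpace ℝ (Fin 2))) (hQ : IsCompact Q)
    (B : Finset (EuclideanSpace ℝ (Fin 2))) (hBQ : (B : Set (EuclideanSpace ℝ (Fin 2))) ⊆ Q)
    (pstar : EuclideanSpace ℝ (Fin 2))
    (hmin : ∀ y : EuclideanSpace ℝ (Fin 2), (∑ q ∈ B, ‖pstar - q‖) ≤ ∑ q ∈ B, ‖y - q‖)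
    (p : EuclideanSpace ℝ (Fin 2)) (hpC : ‖∑ q ∈ B, vers (p - q)‖ ≤ 1) (hpp : p ≠ pstar)
    (αmin : ℝ) (hαmin : αmin ∈ Set.Ioo 0 (π / 2))
    (B' : Finset (EuclideanSpace ℝ (Fin 2)))
    (hB' : ∀ q : EuclideanSpace ℝ (Fin 2), q ∈ B' ↔
      q ∈ B ∧ q ≠ pstar ∧ q ≠ p ∧
        Real.sin αmin ≤ Real.sin (angle (p - pstar) (q - pstar)))
    (hcard : 2 < (B'.card : ℝ) * Real.sin αmin ^ 2) :
    ‖p - pstar‖ ≤ 2 * Metric.diam Q / ((B'.card : ℝ) * Real.sin αmin ^ 2 - 2) :=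
  solution_set_diameter_bound_general Q hQ B hBQ pstar hmin p hpC αmin hαmin B' hB' hcard
end

section
/- Let μ be a Borel probability measure on the Euclidean plane ℝ² with compact support, absolutely continuous with respect to Lebesgue measure, and such that the support of μ is not contained in any affine line. Let p̄ be the unique minimizer over ℝ² of f(p) = ∫ ‖p − q‖ dμ(q) (the generalized median of μ). Let (q_j)_{j ∈ ℕ} be i.i.d. random points with law μ, and for each n let p*_n be any global minimizer over ℝ² of p ↦ ∑_{j=1}^{n} ‖p − q_j‖. Then, almost surely, p*_n → p̄ as n → ∞. -/
open MeasureTheory ProbabilityTheory Filter Topology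

/-!
The empirical mean distances `y ↦ (1/n) ∑_{j<n} dist y (q j)` are all 1-Lipschitz, so the strong
law of large numbers on a countable dense set of centres upgrades, by equicontinuity, to almost
sure uniform convergence on compact sets towards `f y = ∫ dist y z ∂μ`. A Fermat–Torricelli point
of `n` samples lies within twice the empirical mean distance of the median, hence eventually in a
fixed closed ball; uniform convergence on that ball forces `f (p*_n) → min f`, and compactness
together with uniqueness of the minimizer gives `p*_n → p̄`.
-/

section UniformConvergence

variable {ι X α : Type*} [TopologicalSpace X] [UniformSpace α] {F : ι → X → α} {f : X → α}
  {l : Filter ι}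

theorem Equicontinuous.tendstoUniformlyOn_of_tendsto_on_dense (hF : Equicontinuous F)
    (hf : Continuous f) {s : Set X} (hs : Dense s) (h : ∀ y ∈ s, Tendsto (F · y) l (𝓝 (f y)))
    {K : Set X} (hK : IsCompact K) : TendstoUniformlyOn F f l K := by
  have hpt : ∀ x, Tendsto (F · x) l (𝓝 (f x)) := fun x =>
    (hF x).tendsto_of_mem_closure (hf.continuousAt.mono_left nhdsWithin_le_nhds) h (hs x)
  have hcomp := (EquicontinuousOn.tendsto_uniformOnFun_iff_pi' (𝔖 := {K})
    (by simpa using hK) (fun _ _ => hF.equicontinuousOn _) l f).2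
    (tendsto_pi_nhds.2 fun x => hpt x)
  exact UniformOnFun.tendsto_iff_tendstoUniformlyOn.1 hcomp K rfl

end UniformConvergence

section Argmin

variable {ι X : Type*} {l : Filter ι} {f : X → ℝ} {a : X} {p : ι → X}

theorem IsCompact.tendsto_of_tendsto_comp_of_unique_min [TopologicalSpace X] {K : Set X}
    (hK : IsCompact K) (hf : Continuous f) (ha : ∀ y, f a ≤ f y)
    (huniq : ∀ z, (∀ y, f z ≤ f y) → z = a) (hpK : ∀ᶠ i in l, p i ∈ K)
    (hfp : Tendsto (f ∘ p) l (𝓝 (f a))) : Tendsto p l (𝓝 a) := by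
  refine hK.tendsto_nhds_of_unique_mapClusterPt hpK fun z _ hz => huniq z fun y => ?_
  have hfz : f z = f a :=
    eq_of_nhds_neBot (ClusterPt.mono (hz.continuousAt_comp hf.continuousAt) hfp)
  exact hfz ▸ ha y

theorem TendstoUniformlyOn.tendsto_comp_of_le_of_isMin {F : ι → X → ℝ} {K : Set X}
    (hFK : TendstoUniformlyOn F f l K) (hpK : ∀ᶠ i in l, p i ∈ K)
    (hFa : Tendsto (F · a) l (𝓝 (f a))) (ha : ∀ y, f a ≤ f y) (hp : ∀ i, F i (p i) ≤ F i a) :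
    Tendsto (f ∘ p) l (𝓝 (f a)) := by
  have herr : Tendsto (fun i => f (p i) - F i (p i)) l (𝓝 0) := by
    refine Metric.tendsto_nhds.2 fun ε hε => ?_
    filter_upwards [Metric.tendstoUniformlyOn_iff.1 hFK ε hε, hpK] with i hi hpi
    simpa only [Real.dist_eq, sub_zero] using hi (p i) hpi
  refine tendsto_of_tendsto_of_tendsto_of_le_of_le tendsto_const_nhds
    (by simpa using hFa.add herr) (fun i => ha (p i)) fun i => ?_
  simp only [Function.comp_apply]
  linarith [hp i]

end Argmin

section SampleMean

variable {E : Type*} [MetricSpace E]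

noncomputable def sampleMeanDist (x : ℕ → E) (n : ℕ) (y : E) : ℝ :=
  (∑ j ∈ Finset.range n, dist y (x j)) / n

theorem lipschitzWith_one_sampleMeanDist (x : ℕ → E) (n : ℕ) :
    LipschitzWith 1 (sampleMeanDist x n) := by
  refine LipschitzWith.of_le_add fun y z => ?_
  rcases Nat.eq_zero_or_pos n with rfl | hn
  · simp [sampleMeanDist]
  have hsum : ∑ j ∈ Finset.range n, dist y (x j)
      ≤ ∑ j ∈ Finset.range n, dist z (x j) + n * dist y z :=
    calc ∑ j ∈ Finset.range n, dist y (x j)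
        ≤ ∑ j ∈ Finset.range n, (dist z (x j) + dist y z) :=
          Finset.sum_le_sum fun j _ => (dist_triangle y z (x j)).trans_eq (add_comm _ _)
      _ = _ := by simp [Finset.sum_add_distrib]
  have hn' : (0 : ℝ) < n := by exact_mod_cast hn
  rw [sampleMeanDist, sampleMeanDist, div_add' _ _ _ hn'.ne']
  gcongr
  linarith

theorem dist_le_two_mul_sampleMeanDist {x : ℕ → E} {n : ℕ} (hn : n ≠ 0) {p a : E}
    (hp : sampleMeanDist x n p ≤ sampleMeanDist x n a) : dist p a ≤ 2 * sampleMeanDist x n a := by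
  have hsum : n * dist p a
      ≤ ∑ j ∈ Finset.range n, dist p (x j) + ∑ j ∈ Finset.range n, dist a (x j) :=
    calc (n : ℝ) * dist p a = ∑ j ∈ Finset.range n, dist p a := by simp
      _ ≤ ∑ j ∈ Finset.range n, (dist p (x j) + dist a (x j)) :=
          Finset.sum_le_sum fun j _ => dist_triangle_right _ _ _
      _ = _ := Finset.sum_add_distrib
  have hn' : (0 : ℝ) < n := by positivity
  rw [sampleMeanDist, sampleMeanDist, div_le_div_iff_of_pos_right hn'] at hp
  rw [sampleMeanDist, mul_div_assoc', le_div_iff₀ hn']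
  linarith

theorem tendsto_of_isMin_sampleMeanDist [ProperSpace E] {x : ℕ → E} {f : E → ℝ}
    (hf : Continuous f) {s : Set E} (hs : Dense s)
    (hconv : ∀ y ∈ s, Tendsto (fun n => sampleMeanDist x n y) atTop (𝓝 (f y)))
    {a : E} (ha : ∀ y, f a ≤ f y) (huniq : ∀ z, (∀ y, f z ≤ f y) → z = a)
    {p : ℕ → E} (hp : ∀ n y, sampleMeanDist x n (p n) ≤ sampleMeanDist x n y) :
    Tendsto p atTop (𝓝 a) := by
  have hunif : ∀ K, IsCompact K → TendstoUniformlyOn (sampleMeanDist x) f atTop K :=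
    fun K hK => (LipschitzWith.uniformEquicontinuous _ 1
      (lipschitzWith_one_sampleMeanDist x)).equicontinuous.tendstoUniformlyOn_of_tendsto_on_dense
        hf hs hconv hK
  have hFa : Tendsto (sampleMeanDist x · a) atTop (𝓝 (f a)) :=
    (hunif {a} isCompact_singleton).tendsto_at rfl
  set K := Metric.closedBall a (2 * (f a + 1))
  have hpK : ∀ᶠ n in atTop, p n ∈ K := by
    filter_upwards [hFa.eventually (eventually_le_nhds (lt_add_one (f a))),
      eventually_ne_atTop 0] with n hn hn0
    exact (dist_le_two_mul_sampleMeanDist hn0 (hp n a)).trans (by linarith)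
  exact (isCompact_closedBall a _).tendsto_of_tendsto_comp_of_unique_min hf ha huniq hpK
    ((hunif K (isCompact_closedBall a _)).tendsto_comp_of_le_of_isMin hpK hFa ha fun n => hp n a)

end SampleMean

section MeanDist

variable {E : Type*} [MetricSpace E] [MeasurableSpace E] {μ : Measure E}

theorem lipschitzWith_one_integral_dist [IsProbabilityMeasure μ]
    (hμ : ∀ y, Integrable (dist y ·) μ) :
    LipschitzWith 1 fun y => ∫ z, dist y z ∂μ := by
  refine LipschitzWith.of_le_add fun y y' => ?_
  calc ∫ z, dist y z ∂μ ≤ ∫ z, (dist y' z + dist y y') ∂μ :=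
        integral_mono (hμ y) ((hμ y').add (integrable_const _)) fun z =>
          (dist_triangle y y' z).trans_eq (add_comm _ _)
    _ = ∫ z, dist y' z ∂μ + dist y y' := by
        rw [integral_add (hμ y') (integrable_const _), integral_const, probReal_univ, one_smul]

variable [OpensMeasurableSpace E]

theorem integrable_dist_of_measure_compl_eq_zero [IsFiniteMeasure μ] {Q : Set E}
    (hQ : Bornology.IsBounded Q) (hsupp : μ Qᶜ = 0) (y : E) : Integrable (dist y ·) μ := by
  obtain ⟨r, hr⟩ := hQ.subset_closedBall y
  refine Integrable.of_bound (continuous_const.dist continuous_id).aestronglyMeasurable r ?_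
  filter_upwards [measure_eq_zero_iff_ae_notMem.1 hsupp] with z hz
  simpa [dist_comm] using hr (by simpa using hz)

variable {Ω : Type*} [MeasurableSpace Ω] {P : Measure Ω} {q : ℕ → Ω → E}

theorem ae_tendsto_sampleMeanDist (hq : ∀ j, Measurable (q j)) (hlaw : ∀ j, P.map (q j) = μ)
    (hindep : Pairwise fun i j => IndepFun (q i) (q j) P) {y : E}
    (hy : Integrable (dist y ·) μ) :
    ∀ᵐ ω ∂P, Tendsto (fun n => sampleMeanDist (q · ω) n y) atTop (𝓝 (∫ z, dist y z ∂μ)) := by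
  have hdist : Measurable (dist y) := continuous_const.dist continuous_id |>.measurable
  have hmean : ∫ ω, dist y (q 0 ω) ∂P = ∫ z, dist y z ∂μ := by
    rw [← hlaw 0, integral_map (hq 0).aemeasurable hdist.aestronglyMeasurable]
  have hint : Integrable (fun ω => dist y (q 0 ω)) P := by
    rw [← hlaw 0] at hy
    exact (integrable_map_measure hdist.aestronglyMeasurable (hq 0).aemeasurable).1 hy
  have hident : ∀ j, IdentDistrib (fun ω => dist y (q j ω)) (fun ω => dist y (q 0 ω)) P P :=
    fun j => (IdentDistrib.mk (hq j).aemeasurable (hq 0).aemeasurable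
      (by rw [hlaw j, hlaw 0])).comp hdist
  simpa only [hmean, sampleMeanDist] using
    strong_law_ae_real (fun j ω => dist y (q j ω)) hint
      (fun i j hij => (hindep hij).comp hdist hdist) hident

theorem ae_tendsto_of_isMin_sampleMeanDist [ProperSpace E] [IsProbabilityMeasure μ]
    (hμ : ∀ y, Integrable (dist y ·) μ) (hq : ∀ j, Measurable (q j))
    (hlaw : ∀ j, P.map (q j) = μ) (hindep : Pairwise fun i j => IndepFun (q i) (q j) P) {a : E}
    (ha : ∀ y, ∫ z, dist a z ∂μ ≤ ∫ z, dist y z ∂μ)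
    (huniq : ∀ b, (∀ y, ∫ z, dist b z ∂μ ≤ ∫ z, dist y z ∂μ) → b = a) {p : ℕ → Ω → E}
    (hp : ∀ n ω y, sampleMeanDist (q · ω) n (p n ω) ≤ sampleMeanDist (q · ω) n y) :
    ∀ᵐ ω ∂P, Tendsto (p · ω) atTop (𝓝 a) := by
  obtain ⟨s, hsc, hsd⟩ := TopologicalSpace.exists_countable_dense E
  have hconv := (ae_ball_iff hsc).2 fun y _ => ae_tendsto_sampleMeanDist hq hlaw hindep (hμ y)
  filter_upwards [hconv] with ω hω
  exact tendsto_of_isMin_sampleMeanDist (lipschitzWith_one_integral_dist hμ).continuous hsd hω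
    ha huniq (hp · ω)

end MeanDist

theorem empirical_FT_points_tendsto_median_general
    (μ : Measure (EuclideanSpace ℝ (Fin 2))) [IsProbabilityMeasure μ]
    (Q : Set (EuclideanSpace ℝ (Fin 2))) (hQ : IsCompact Q) (hsupp : μ Qᶜ = 0)
    (pbar : EuclideanSpace ℝ (Fin 2))
    (hpbar : ∀ y : EuclideanSpace ℝ (Fin 2), (∫ z, ‖pbar - z‖ ∂μ) ≤ ∫ z, ‖y - z‖ ∂μ)
    (hpbaruniq : ∀ p : EuclideanSpace ℝ (Fin 2),
      (∀ y : EuclideanSpace ℝ (Fin 2), (∫ z, ‖p - z‖ ∂μ) ≤ ∫ z, ‖y - z‖ ∂μ) → p = pbar)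
    (Ω : Type*) [MeasureSpace Ω]
    (q : ℕ → Ω → EuclideanSpace ℝ (Fin 2)) (hmeas : ∀ j, Measurable (q j))
    (hlaw : ∀ j, Measure.map (q j) ℙ = μ)
    (hindep : iIndepFun q ℙ)
    (pFT : ℕ → Ω → EuclideanSpace ℝ (Fin 2))
    (hFT : ∀ n ω, ∀ y : EuclideanSpace ℝ (Fin 2),
      (∑ j ∈ Finset.range n, ‖pFT n ω - q j ω‖) ≤ ∑ j ∈ Finset.range n, ‖y - q j ω‖) :
    ∀ᵐ ω : Ω, Tendsto (fun n => pFT n ω) atTop (nhds pbar) := by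
  simp only [← dist_eq_norm] at hpbar hpbaruniq hFT
  exact ae_tendsto_of_isMin_sampleMeanDist
    (integrable_dist_of_measure_compl_eq_zero hQ.isBounded hsupp) hmeas hlaw
    (fun i j hij => hindep.indepFun hij) hpbar hpbaruniq
    fun n ω y => div_le_div_of_nonneg_right (hFT n ω y) n.cast_nonneg

/-- Let `μ` be a compactly supported Borel probability measure on the
Euclidean plane, absolutely continuous w.r.t. Lebesgue measure, whose support is contained in
no affine line. Let `pbar` be the unique minimizer of `f(p) = ∫ ‖p - y‖ dμ(y)` (the
generalized median of `μ`). Let `(q j)` be i.i.d. with law `μ` and, for each `n`, let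
`pFT n ω` be any global minimizer of `p ↦ ∑_{j<n} ‖p - q j ω‖` (a Fermat–Torricelli point of
the first `n` samples). Then, almost surely, `pFT n ω → pbar`. -/
theorem empirical_FT_points_tendsto_median
    (μ : Measure (EuclideanSpace ℝ (Fin 2))) [IsProbabilityMeasure μ]
    (Q : Set (EuclideanSpace ℝ (Fin 2))) (hQ : IsCompact Q) (hsupp : μ Qᶜ = 0)
    (hac : μ ≪ volume)
    (hline : ∀ a d : EuclideanSpace ℝ (Fin 2), d ≠ 0 →
      μ {x : EuclideanSpace ℝ (Fin 2) | ¬ ∃ t : ℝ, x = a + t • d} ≠ 0)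
    (pbar : EuclideanSpace ℝ (Fin 2))
    (hpbar : ∀ y : EuclideanSpace ℝ (Fin 2), (∫ z, ‖pbar - z‖ ∂μ) ≤ ∫ z, ‖y - z‖ ∂μ)
    (hpbaruniq : ∀ p : EuclideanSpace ℝ (Fin 2),
      (∀ y : EuclideanSpace ℝ (Fin 2), (∫ z, ‖p - z‖ ∂μ) ≤ ∫ z, ‖y - z‖ ∂μ) → p = pbar)
    (Ω : Type*) [MeasureSpace Ω] [IsProbabilityMeasure (ℙ : Measure Ω)]
    (q : ℕ → Ω → EuclideanSpace ℝ (Fin 2)) (hmeas : ∀ j, Measurable (q j))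
    (hlaw : ∀ j, Measure.map (q j) ℙ = μ)
    (hindep : iIndepFun q ℙ)
    (pFT : ℕ → Ω → EuclideanSpace ℝ (Fin 2))
    (hFT : ∀ n ω, ∀ y : EuclideanSpace ℝ (Fin 2),
      (∑ j ∈ Finset.range n, ‖pFT n ω - q j ω‖) ≤ ∑ j ∈ Finset.range n, ‖y - q j ω‖) :
    ∀ᵐ ω : Ω, Tendsto (fun n => pFT n ω) atTop (nhds pbar) :=
  empirical_FT_points_tendsto_median_general μ Q hQ hsupp pbar hpbar hpbaruniq Ω q hmeas hlaw hindep
    pFT hFT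
end

section
/- Let Ω ⊂ ℝ² be a nonempty compact convex set and fix m ≥ 1. For an m-tuple p = (p₁, …, p_m) of pairwise distinct points of Ω, let V_i(p) = {q ∈ Ω : ‖q − p_i‖ ≤ ‖q − p_j‖ for all j} denote the Voronoi cell of p_i in Ω. If p⁽ⁿ⁾ = (p₁⁽ⁿ⁾, …, p_m⁽ⁿ⁾) is a sequence of m-tuples of points of Ω converging to a tuple p̂ = (p̂₁, …, p̂_m) of pairwise distinct points of Ω, then for each i the Voronoi cells V_i(p⁽ⁿ⁾) converge to V_i(p̂) in the Hausdorff distance. -/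
/-!
If every site moves by at most `η`, the cell of `p i` is squeezed between the `∓δ`-relaxed
cells of the limit configuration (defined by squared distances), with `δ = O(η)`. Moving a point
of the `δ`-relaxed cell towards the site `p̂ i` by the fraction `t = 2δ / c`, where `c` is the
least squared distance from `p̂ i` to another site, lands in the `-δ`-relaxed cell, because
`q ↦ ‖q - p̂ i‖² - ‖q - p̂ j‖²` is affine and equals `-‖p̂ i - p̂ j‖²` at `p̂ i`. Convexity keeps the
moved point in `Ω`, and it has moved by at most `t · diam Ω = O(η)`.
-/

open Filter Metric Topology

lemma hausdorffDist_le_of_subset_of_subset {α : Type*} [PseudoMetricSpace α]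
    {s t lo hi : Set α} {r : ℝ} (hr : 0 ≤ r) (hlos : lo ⊆ s) (hshi : s ⊆ hi) (hlot : lo ⊆ t)
    (hthi : t ⊆ hi) (h : ∀ x ∈ hi, ∃ y ∈ lo, dist x y ≤ r) : hausdorffDist s t ≤ r :=
  hausdorffDist_le_of_mem_dist hr
    (fun x hx => let ⟨y, hy, hxy⟩ := h x (hshi hx); ⟨y, hlot hy, hxy⟩)
    (fun x hx => let ⟨y, hy, hxy⟩ := h x (hthi hx); ⟨y, hlos hy, hxy⟩)

lemma exists_pos_le_norm_sub_sq {E ι : Type*} [NormedAddCommGroup E] [Finite ι] {a : ι → E}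
    {i : ι} (ha : ∀ j ≠ i, a j ≠ a i) :
    ∃ c > 0, ∀ j ≠ i, c ≤ ‖a i - a j‖ ^ 2 := by
  have h : ∀ j, ∀ᶠ c in 𝓝[>] (0 : ℝ), j ≠ i → c ≤ ‖a i - a j‖ ^ 2 := by
    intro j
    rcases eq_or_ne j i with rfl | hj
    · exact Eventually.of_forall fun _ h => absurd rfl h
    · have : 0 < ‖a i - a j‖ ^ 2 := pow_pos (norm_pos_iff.2 (sub_ne_zero.2 (ha j hj).symm)) 2
      exact eventually_nhdsWithin_of_eventually_nhds
        ((eventually_le_nhds this).mono fun _ hc _ => hc)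
  obtain ⟨c, hc, hc0⟩ := ((eventually_all.2 h).and self_mem_nhdsWithin).exists
  exact ⟨c, hc0, hc⟩

lemma norm_sub_sq_sub_norm_sub_sq_add_smul_sub {E : Type*} [SeminormedAddCommGroup E]
    [InnerProductSpace ℝ E] (q a b : E) (t : ℝ) :
    ‖q + t • (a - q) - a‖ ^ 2 - ‖q + t • (a - q) - b‖ ^ 2
      = (1 - t) * (‖q - a‖ ^ 2 - ‖q - b‖ ^ 2) - t * ‖a - b‖ ^ 2 := by
  have h₁ : q + t • (a - q) - a = (1 - t) • (q - a) := by module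
  have h₂ : q + t • (a - q) - b = (1 - t) • (q - a) + (a - b) := by module
  have h₃ : q - b = (q - a) + (a - b) := by abel
  rw [h₁, h₂, h₃, norm_add_sq_real, norm_add_sq_real, norm_smul, real_inner_smul_left,
    Real.norm_eq_abs, mul_pow, sq_abs]
  ring

section Voronoi

variable {E ι : Type*} [SeminormedAddCommGroup E]

def voronoiCell (Ω : Set E) (a : ι → E) (i : ι) : Set E :=
  {q ∈ Ω | ∀ j, ‖q - a i‖ ≤ ‖q - a j‖}

/-- Squared distances are used because `‖q - a‖ ^ 2 - ‖q - b‖ ^ 2` is affine in `q`. -/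
def relaxedVoronoiCell (Ω : Set E) (a : ι → E) (i : ι) (δ : ℝ) : Set E :=
  {q ∈ Ω | ∀ j ≠ i, ‖q - a i‖ ^ 2 ≤ ‖q - a j‖ ^ 2 + δ}

lemma voronoiCell_subset_relaxedVoronoiCell {Ω : Set E} {a b : ι → E} {i : ι} {η : ℝ}
    (hbdd : Bornology.IsBounded Ω) (ha : ∀ j, a j ∈ Ω) (hab : ∀ j, ‖b j - a j‖ ≤ η) :
    voronoiCell Ω b i ⊆ relaxedVoronoiCell Ω a i (4 * η * (diam Ω + η)) := by
  rintro q ⟨hqΩ, hqb⟩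
  refine ⟨hqΩ, fun j _ => ?_⟩
  have hη : 0 ≤ η := (norm_nonneg _).trans (hab i)
  have hi := norm_sub_le_norm_sub_add_norm_sub q (b i) (a i)
  have hj := norm_sub_le_norm_sub_add_norm_sub q (a j) (b j)
  rw [norm_sub_rev (a j)] at hj
  have hdiam : ‖q - a j‖ ≤ diam Ω := dist_eq_norm q (a j) ▸ dist_le_diam_of_mem hbdd hqΩ (ha j)
  have hgap : ‖q - a i‖ ≤ ‖q - a j‖ + 2 * η := by linarith [hqb j, hab i, hab j]
  nlinarith [norm_nonneg (q - a i)]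

lemma relaxedVoronoiCell_subset_voronoiCell {Ω : Set E} {a b : ι → E} {i : ι} {η : ℝ}
    (hbdd : Bornology.IsBounded Ω) (hai : a i ∈ Ω) (hab : ∀ j, ‖b j - a j‖ ≤ η) :
    relaxedVoronoiCell Ω a i (-(4 * η * (diam Ω + η))) ⊆ voronoiCell Ω b i := by
  rintro q ⟨hqΩ, hqa⟩
  refine ⟨hqΩ, fun j => ?_⟩
  rcases eq_or_ne j i with rfl | hj
  · rfl
  have hη : 0 ≤ η := (norm_nonneg _).trans (hab i)
  have hi := norm_sub_le_norm_sub_add_norm_sub q (a i) (b i)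
  have hj' := norm_sub_le_norm_sub_add_norm_sub q (b j) (a j)
  rw [norm_sub_rev (a i)] at hi
  have hdiam : ‖q - a i‖ ≤ diam Ω := dist_eq_norm q (a i) ▸ dist_le_diam_of_mem hbdd hqΩ hai
  have hgap : ‖q - a i‖ + 2 * η ≤ ‖q - a j‖ := by
    have := hqa j hj
    nlinarith [norm_nonneg (q - a i), norm_nonneg (q - a j)]
  linarith [hab i, hab j]

variable [InnerProductSpace ℝ E]

lemma exists_mem_relaxedVoronoiCell_neg_dist_le {Ω : Set E} {a : ι → E} {i : ι} {c δ : ℝ}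
    (hconv : Convex ℝ Ω) (hbdd : Bornology.IsBounded Ω) (hai : a i ∈ Ω) (hc0 : 0 < c)
    (hc : ∀ j ≠ i, c ≤ ‖a i - a j‖ ^ 2) (hδ : 0 ≤ δ) (hδc : 2 * δ ≤ c) {q : E}
    (hq : q ∈ relaxedVoronoiCell Ω a i δ) :
    ∃ q' ∈ relaxedVoronoiCell Ω a i (-δ), dist q q' ≤ 2 * δ / c * diam Ω := by
  obtain ⟨hqΩ, hqa⟩ := hq
  set t := 2 * δ / c
  have ht : t ∈ Set.Icc (0 : ℝ) 1 :=
    ⟨by positivity, (div_le_one hc0).2 hδc⟩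
  have htc : t * c = 2 * δ := div_mul_cancel₀ _ hc0.ne'
  refine ⟨q + t • (a i - q), ⟨hconv.add_smul_sub_mem hqΩ hai ht, fun j hj => ?_⟩, ?_⟩
  · have := norm_sub_sq_sub_norm_sub_sq_add_smul_sub q (a i) (a j) t
    have h1 := mul_le_mul_of_nonneg_left (sub_le_iff_le_add.2 (hqa j hj)) (sub_nonneg.2 ht.2)
    have h2 := mul_le_mul_of_nonneg_left (hc j hj) ht.1
    nlinarith [ht.1]
  · rw [dist_eq_norm, sub_add_cancel_left, norm_neg, norm_smul, Real.norm_of_nonneg ht.1,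
    ← dist_eq_norm]
    exact mul_le_mul_of_nonneg_left (dist_le_diam_of_mem hbdd hai hqΩ) ht.1

lemma hausdorffDist_voronoiCell_le {Ω : Set E} {a b : ι → E} {i : ι} {c η : ℝ}
    (hconv : Convex ℝ Ω) (hbdd : Bornology.IsBounded Ω) (ha : ∀ j, a j ∈ Ω) (hc0 : 0 < c)
    (hc : ∀ j ≠ i, c ≤ ‖a i - a j‖ ^ 2) (hab : ∀ j, ‖b j - a j‖ ≤ η)
    (hηc : 2 * (4 * η * (diam Ω + η)) ≤ c) :
    hausdorffDist (voronoiCell Ω b i) (voronoiCell Ω a i)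
      ≤ 2 * (4 * η * (diam Ω + η)) / c * diam Ω := by
  have hη : 0 ≤ η := (norm_nonneg _).trans (hab i)
  have haa : ∀ j, ‖a j - a j‖ ≤ η := by simpa using fun _ => hη
  have hδ : 0 ≤ 4 * η * (diam Ω + η) := by have := diam_nonneg (s := Ω); positivity
  exact hausdorffDist_le_of_subset_of_subset (by positivity)
    (relaxedVoronoiCell_subset_voronoiCell hbdd (ha i) hab)
    (voronoiCell_subset_relaxedVoronoiCell hbdd ha hab)
    (relaxedVoronoiCell_subset_voronoiCell hbdd (ha i) haa)
    (voronoiCell_subset_relaxedVoronoiCell hbdd ha haa)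
    fun _ hq => exists_mem_relaxedVoronoiCell_neg_dist_le hconv hbdd (ha i) hc0 hc hδ hηc hq

end Voronoi

theorem voronoi_cells_hausdorff_convergence_general
    (Ω : Set (EuclideanSpace ℝ (Fin 2))) (hcomp : IsCompact Ω)
    (hconv : Convex ℝ Ω)
    (m : ℕ)
    (p : ℕ → Fin m → EuclideanSpace ℝ (Fin 2)) (phat : Fin m → EuclideanSpace ℝ (Fin 2))
    (hphatΩ : ∀ i, phat i ∈ Ω) (hphatinj : Function.Injective phat)
    (hconvg : ∀ i, Tendsto (fun n => p n i) atTop (nhds (phat i))) :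
    ∀ i, Tendsto
      (fun n => Metric.hausdorffDist
        {q ∈ Ω | ∀ j, ‖q - p n i‖ ≤ ‖q - p n j‖}
        {q ∈ Ω | ∀ j, ‖q - phat i‖ ≤ ‖q - phat j‖})
      atTop (nhds 0) := by
  intro i
  obtain ⟨c, hc0, hc⟩ := exists_pos_le_norm_sub_sq (i := i) fun _ hj => hphatinj.ne hj
  set η := fun n => dist (p n) phat
  set δ := fun n => 4 * η n * (diam Ω + η n)
  have hη : Tendsto η atTop (𝓝 0) :=
    tendsto_iff_dist_tendsto_zero.1 (tendsto_pi_nhds.2 hconvg)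
  have hδ : Tendsto δ atTop (𝓝 0) := by
    simpa using (hη.const_mul 4).mul (hη.const_add (diam Ω))
  have hsmall : ∀ᶠ n in atTop, 2 * δ n ≤ c :=
    (hδ.eventually (ge_mem_nhds (half_pos hc0))).mono fun _ h => by linarith
  refine squeeze_zero' (.of_forall fun _ => hausdorffDist_nonneg) ?_
    (by simpa using ((hδ.const_mul 2).div_const c).mul_const (diam Ω))
  filter_upwards [hsmall] with n hn
  exact hausdorffDist_voronoiCell_le hconv hcomp.isBounded hphatΩ hc0 hc
    (fun j => dist_le_pi_dist (p n) phat j) hn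

/-- Let `Ω ⊂ ℝ²` be a nonempty compact convex set. For an `m`-tuple `p` of
pairwise distinct points of `Ω`, let `V i p = {q ∈ Ω : ∀ j, ‖q - p i‖ ≤ ‖q - p j‖}` be the
Voronoi cell of `p i` in `Ω`. If a sequence `p n` of such tuples converges (componentwise) to
a tuple `phat` of pairwise distinct points of `Ω`, then for each `i` the Voronoi cells
`V i (p n)` converge to `V i phat` in the Hausdorff distance. -/
theorem voronoi_cells_hausdorff_convergence
    (Ω : Set (EuclideanSpace ℝ (Fin 2))) (hne : Ω.Nonempty) (hcomp : IsCompact Ω)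
    (hconv : Convex ℝ Ω)
    (m : ℕ) (hm : 1 ≤ m)
    (p : ℕ → Fin m → EuclideanSpace ℝ (Fin 2)) (phat : Fin m → EuclideanSpace ℝ (Fin 2))
    (hpΩ : ∀ n i, p n i ∈ Ω) (hpinj : ∀ n, Function.Injective (p n))
    (hphatΩ : ∀ i, phat i ∈ Ω) (hphatinj : Function.Injective phat)
    (hconvg : ∀ i, Tendsto (fun n => p n i) atTop (nhds (phat i))) :
    ∀ i, Tendsto
      (fun n => Metric.hausdorffDist
        {q ∈ Ω | ∀ j, ‖q - p n i‖ ≤ ‖q - p n j‖}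
        {q ∈ Ω | ∀ j, ‖q - phat i‖ ≤ ‖q - phat j‖})
      atTop (nhds 0) :=
  voronoi_cells_hausdorff_convergence_general Ω hcomp hconv m p phat hphatΩ hphatinj hconvg
end

section
/- Define the sequence (q_k)_{k ≥ 1} in the Euclidean plane ℝ² by q₁ = (1,0), q₂ = (−1,0), q₃ = (0,1), q₄ = (0,−1), and for k ≥ 5, q_k = (0,1) if k is odd and q_k = (0,−1) if k is even. For each k ≥ 4 let FT_k denote the unique global minimizer over ℝ² of the Weber function W_k(p) = ∑_{j=1}^{k} ‖p − q_j‖ (counted with multiplicity). Then FT_k = (0,0) for every even k ≥ 4, and FT_k = (0, 1/√3) for every odd k ≥ 5; in particular, the sequence (FT_k) does not converge. -/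
/-!
If the unit vectors `u j` pointing from the `q j` towards a point `x` sum to zero, then `x`
minimizes the Weber function: `‖p - q j‖ ≥ ⟪u j, p - q j⟫`, and the sum of the right-hand sides
does not depend on `p` because `∑ u j = 0`, while at `p = x` every inequality is an equality.
Equality for another minimizer `p` puts `p` on every ray from `q j` through `x`, and two
non-parallel rays meet only at `x`.

At the origin the points `±(1, 0)` and `±(0, 1)` contribute opposite unit vectors in pairs, so it
balances every even `k`. For odd `k` one copy of `(0, 1)` is left over; the balancing point is then
the Fermat–Torricelli point `(0, 1/√3)` of the triangle `(1, 0), (-1, 0), (0, 1)`, seen from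
which the triangle's vertices are `120°` apart. It lies between `(0, 1)` and `(0, -1)`, so the
remaining pairs still cancel there.
-/

open Filter

/-- The point `(x, y)` of the Euclidean plane `ℝ²`. -/
noncomputable def pt (x y : ℝ) : EuclideanSpace ℝ (Fin 2) :=
  (WithLp.equiv 2 (Fin 2 → ℝ)).symm ![x, y]

open Finset RealInnerProductSpace

section Weber

variable {E ι : Type*} [NormedAddCommGroup E] [InnerProductSpace ℝ E]

/-- The gradient of `p ↦ ∑ i ∈ s, ‖p - q i‖` at a point `x` different from all the `q i`; a term
with `x = q i` is `0`. -/
noncomputable def weberGradient (s : Finset ι) (q : ι → E) (x : E) : E :=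
  ∑ i ∈ s, ‖x - q i‖⁻¹ • (x - q i)

lemma real_inner_inv_norm_smul_le_norm (v w : E) : ⟪‖v‖⁻¹ • v, w⟫ ≤ ‖w‖ := by
  rw [real_inner_smul_left]
  rcases eq_or_ne v 0 with rfl | hv
  · simp
  calc ‖v‖⁻¹ * ⟪v, w⟫ ≤ ‖v‖⁻¹ * (‖v‖ * ‖w‖) := by gcongr; exact real_inner_le_norm v w
    _ = ‖w‖ := by field_simp

lemma real_inner_inv_norm_smul_self (v : E) : ⟪‖v‖⁻¹ • v, v⟫ = ‖v‖ := by
  rw [real_inner_smul_left, real_inner_self_eq_norm_sq]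
  rcases eq_or_ne v 0 with rfl | hv
  · simp
  field_simp

lemma eq_norm_smul_of_real_inner_inv_norm_smul_eq_norm {v w : E} (hv : v ≠ 0)
    (h : ⟪‖v‖⁻¹ • v, w⟫ = ‖w‖) : w = ‖w‖ • ‖v‖⁻¹ • v := by
  have hu : ‖‖v‖⁻¹ • v‖ = 1 := by simp [norm_smul, hv]
  have := inner_eq_norm_mul_iff_real.mp (by rw [h, hu, one_mul])
  rwa [hu, one_smul, eq_comm] at this

variable (s : Finset ι) (q : ι → E) {x : E}

lemma sum_real_inner_eq_sum_norm_of_weberGradient_eq_zero (hx : weberGradient s q x = 0)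
    (p : E) :
    ∑ i ∈ s, ⟪‖x - q i‖⁻¹ • (x - q i), p - q i⟫ = ∑ i ∈ s, ‖x - q i‖ := by
  have hsplit : ∀ i, p - q i = (p - x) + (x - q i) := fun i => by abel
  simp_rw [hsplit, inner_add_right, sum_add_distrib, ← sum_inner, real_inner_inv_norm_smul_self]
  rw [← weberGradient, hx, inner_zero_left, zero_add]

theorem sum_norm_sub_le_of_weberGradient_eq_zero (hx : weberGradient s q x = 0) (p : E) :
    ∑ i ∈ s, ‖x - q i‖ ≤ ∑ i ∈ s, ‖p - q i‖ := by
  rw [← sum_real_inner_eq_sum_norm_of_weberGradient_eq_zero s q hx p]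
  exact sum_le_sum fun i _ => real_inner_inv_norm_smul_le_norm _ _

theorem eq_of_weberGradient_eq_zero (hx : weberGradient s q x = 0) {i j : ι} (hi : i ∈ s)
    (hj : j ∈ s) (hij : LinearIndependent ℝ ![x - q i, x - q j]) {p : E}
    (hp : ∑ i ∈ s, ‖p - q i‖ ≤ ∑ i ∈ s, ‖x - q i‖) : p = x := by
  have htight : ∀ k ∈ s, ⟪‖x - q k‖⁻¹ • (x - q k), p - q k⟫ = ‖p - q k‖ := by
    have hnonneg : ∀ k ∈ s, 0 ≤ ‖p - q k‖ - ⟪‖x - q k‖⁻¹ • (x - q k), p - q k⟫ :=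
      fun k _ => sub_nonneg.mpr (real_inner_inv_norm_smul_le_norm _ _)
    have hsum : ∑ k ∈ s, (‖p - q k‖ - ⟪‖x - q k‖⁻¹ • (x - q k), p - q k⟫) = 0 := by
      rw [sum_sub_distrib, sum_real_inner_eq_sum_norm_of_weberGradient_eq_zero s q hx p]
      exact le_antisymm (sub_nonpos.mpr hp)
        (sub_nonneg.mpr (sum_norm_sub_le_of_weberGradient_eq_zero s q hx p))
    intro k hk
    linarith [(sum_eq_zero_iff_of_nonneg hnonneg).mp hsum k hk]
  have hray : ∀ k ∈ s, x - q k ≠ 0 → ∃ a : ℝ, p - x = a • (x - q k) := by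
    intro k hk hk0
    refine ⟨‖p - q k‖ * ‖x - q k‖⁻¹ - 1, ?_⟩
    rw [sub_smul, one_smul, mul_smul,
      ← eq_norm_smul_of_real_inner_inv_norm_smul_eq_norm hk0 (htight k hk)]
    abel
  obtain ⟨a, ha⟩ := hray i hi (hij.ne_zero 0)
  obtain ⟨b, hb⟩ := hray j hj (hij.ne_zero 1)
  have hab := LinearIndependent.pair_iff.mp hij a (-b) <| by
    rw [neg_smul, ← sub_eq_add_neg, ← ha, ← hb, sub_self]
  rw [← sub_eq_zero, ha, hab.1, zero_smul]

end Weber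

section Plane

@[simp] lemma pt_apply_zero (a b : ℝ) : pt a b 0 = a := by simp [pt]
@[simp] lemma pt_apply_one (a b : ℝ) : pt a b 1 = b := by simp [pt]

lemma eq_pt_iff {v : EuclideanSpace ℝ (Fin 2)} {a b : ℝ} : v = pt a b ↔ v 0 = a ∧ v 1 = b := by
  refine ⟨fun h => by simp [h], fun ⟨h0, h1⟩ => ?_⟩
  ext i
  fin_cases i <;> simp [h0, h1]

lemma pt_sub_pt (a b c d : ℝ) : pt a b - pt c d = pt (a - c) (b - d) := by
  simp [eq_pt_iff]

lemma smul_pt (r a b : ℝ) : r • pt a b = pt (r * a) (r * b) := by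
  simp [eq_pt_iff]

lemma pt_add_pt (a b c d : ℝ) : pt a b + pt c d = pt (a + c) (b + d) := by
  simp [eq_pt_iff]

lemma pt_zero_zero : pt 0 0 = 0 := (eq_pt_iff.mpr (by simp)).symm

lemma norm_pt (a b : ℝ) : ‖pt a b‖ = √(a ^ 2 + b ^ 2) := by
  simp [EuclideanSpace.norm_eq, Fin.sum_univ_two]

lemma linearIndependent_pt_pt {a b d : ℝ} (ha : a ≠ 0) (hd : d ≠ 0) :
    LinearIndependent ℝ ![pt a b, pt 0 d] := by
  refine LinearIndependent.pair_iff.mpr fun s t hst => ?_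
  rw [smul_pt, smul_pt, pt_add_pt, ← pt_zero_zero, eq_pt_iff] at hst
  have hs : s = 0 := by simpa [ha] using hst.1
  subst hs
  simpa [hd] using hst.2

lemma inv_norm_smul_sub_vertical_add {c : ℝ} (hc : |c| < 1) :
    ‖pt 0 c - pt 0 1‖⁻¹ • (pt 0 c - pt 0 1) +
      ‖pt 0 c - pt 0 (-1)‖⁻¹ • (pt 0 c - pt 0 (-1)) = 0 := by
  obtain ⟨hc₁, hc₂⟩ := abs_lt.mp hc
  simp only [pt_sub_pt, norm_pt, smul_pt, pt_add_pt, sub_zero, sub_neg_eq_add,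
    zero_pow two_ne_zero, zero_add, Real.sqrt_sq_eq_abs, mul_zero]
  rw [← pt_zero_zero, abs_of_neg (by linarith), abs_of_pos (by linarith)]
  congr 1
  field_simp [show c - 1 ≠ 0 by linarith, show c + 1 ≠ 0 by linarith]
  ring

lemma inv_norm_smul_sub_horizontal_add :
    ‖pt 0 0 - pt 1 0‖⁻¹ • (pt 0 0 - pt 1 0) +
      ‖pt 0 0 - pt (-1) 0‖⁻¹ • (pt 0 0 - pt (-1) 0) = 0 := by
  simp only [pt_sub_pt, norm_pt, smul_pt, pt_add_pt]
  rw [← pt_zero_zero]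
  norm_num

lemma one_lt_sqrt_three : 1 < √3 := by
  rw [Real.lt_sqrt zero_le_one]
  norm_num

lemma one_div_sqrt_three_lt_one : 1 / √3 < 1 :=
  (div_lt_one (by positivity)).mpr one_lt_sqrt_three

lemma inv_norm_smul_sub_fermat_point_add :
    ‖pt 0 (1 / √3) - pt 1 0‖⁻¹ • (pt 0 (1 / √3) - pt 1 0) +
      ‖pt 0 (1 / √3) - pt (-1) 0‖⁻¹ • (pt 0 (1 / √3) - pt (-1) 0) +
      ‖pt 0 (1 / √3) - pt 0 1‖⁻¹ • (pt 0 (1 / √3) - pt 0 1) = 0 := by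
  have hs : √3 ^ 2 = 3 := Real.sq_sqrt (by norm_num)
  have hc := one_div_sqrt_three_lt_one
  have hn : ∀ a : ℝ, a ^ 2 = 1 → √(a ^ 2 + (1 / √3) ^ 2) = 2 / √3 := fun a ha => by
    rw [Real.sqrt_eq_iff_mul_self_eq_of_pos (by positivity), ha]
    field_simp
    linarith
  simp only [pt_sub_pt, norm_pt, smul_pt, pt_add_pt, sub_zero,
    hn (0 - 1) (by norm_num), hn (0 - -1) (by norm_num)]
  rw [← pt_zero_zero]
  simp only [zero_pow two_ne_zero, zero_add, Real.sqrt_sq_eq_abs, mul_zero]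
  rw [abs_of_neg (sub_neg.mpr hc)]
  congr 1
  · ring
  · field_simp [(sub_neg.mpr one_lt_sqrt_three).ne]
    ring

end Plane

section PeriodicTail

variable {α M : Type*} [AddCommMonoid M] (f : α → M) {q : ℕ → α}

lemma sum_Icc_two_mul_add_four (hodd : ∀ k, 5 ≤ k → Odd k → q k = q 3)
    (heven : ∀ k, 5 ≤ k → Even k → q k = q 4) (n : ℕ) :
    ∑ j ∈ Icc 1 (2 * n + 4), f (q j) = f (q 1) + f (q 2) + (n + 1) • (f (q 3) + f (q 4)) := by
  induction n with
  | zero =>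
    simp [sum_Icc_succ_top, add_assoc]
  | succ n ih =>
    rw [show 2 * (n + 1) + 4 = 2 * n + 4 + 1 + 1 by ring, sum_Icc_succ_top (by omega),
      sum_Icc_succ_top (by omega), ih, hodd (2 * n + 4 + 1) (by omega) ⟨n + 2, by ring⟩,
      heven (2 * n + 4 + 1 + 1) (by omega) ⟨n + 3, by ring⟩, succ_nsmul _ (n + 1)]
    abel

lemma sum_Icc_two_mul_add_five (hodd : ∀ k, 5 ≤ k → Odd k → q k = q 3)
    (heven : ∀ k, 5 ≤ k → Even k → q k = q 4) (n : ℕ) :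
    ∑ j ∈ Icc 1 (2 * n + 5), f (q j) =
      f (q 1) + f (q 2) + f (q 3) + (n + 1) • (f (q 3) + f (q 4)) := by
  rw [sum_Icc_succ_top (by omega), sum_Icc_two_mul_add_four f hodd heven,
    hodd (2 * n + 4 + 1) (by omega) ⟨n + 2, by ring⟩]
  abel

end PeriodicTail

section SpecialSequence

variable {q : ℕ → EuclideanSpace ℝ (Fin 2)} (hq1 : q 1 = pt 1 0) (hq2 : q 2 = pt (-1) 0)
  (hq3 : q 3 = pt 0 1) (hq4 : q 4 = pt 0 (-1)) (hodd : ∀ k, 5 ≤ k → Odd k → q k = q 3)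
  (heven : ∀ k, 5 ≤ k → Even k → q k = q 4)

include hq1 hq2 hq3 hq4 hodd heven

lemma weberGradient_Icc_two_mul_add_four (n : ℕ) :
    weberGradient (Icc 1 (2 * n + 4)) q (pt 0 0) = 0 := by
  rw [weberGradient,
    sum_Icc_two_mul_add_four (fun a => ‖pt 0 0 - a‖⁻¹ • (pt 0 0 - a)) hodd heven,
    hq1, hq2, hq3, hq4, inv_norm_smul_sub_horizontal_add, inv_norm_smul_sub_vertical_add (by simp),
    smul_zero, add_zero]

lemma weberGradient_Icc_two_mul_add_five (n : ℕ) :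
    weberGradient (Icc 1 (2 * n + 5)) q (pt 0 (1 / √3)) = 0 := by
  have hc : |1 / √3| < 1 := by
    rw [abs_of_pos (by positivity)]
    exact one_div_sqrt_three_lt_one
  rw [weberGradient,
    sum_Icc_two_mul_add_five (fun a => ‖pt 0 (1 / √3) - a‖⁻¹ • (pt 0 (1 / √3) - a)) hodd heven,
    hq1, hq2, hq3, hq4, inv_norm_smul_sub_fermat_point_add, inv_norm_smul_sub_vertical_add hc,
    smul_zero, add_zero]

end SpecialSequence

/-- For the sequence `q₁ = (1,0)`, `q₂ = (-1,0)`, `q₃ = (0,1)`,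
`q₄ = (0,-1)`, and `q_k = (0,1)` for odd `k ≥ 5`, `q_k = (0,-1)` for even `k ≥ 5`, the
Fermat–Torricelli points `FT_k` of the first `k` points (i.e., the unique global minimizers
of `W_k(p) = ∑_{j=1}^k ‖p - q_j‖`) satisfy `FT_k = (0,0)` for even `k ≥ 4` and
`FT_k = (0, 1/√3)` for odd `k ≥ 5`; in particular the sequence `(FT_k)` does not converge. -/
theorem FT_points_of_special_sequence_diverge
    (q : ℕ → EuclideanSpace ℝ (Fin 2))
    (hq1 : q 1 = pt 1 0) (hq2 : q 2 = pt (-1) 0) (hq3 : q 3 = pt 0 1) (hq4 : q 4 = pt 0 (-1))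
    (hqodd : ∀ k, 5 ≤ k → Odd k → q k = pt 0 1)
    (hqeven : ∀ k, 5 ≤ k → Even k → q k = pt 0 (-1))
    (W : ℕ → EuclideanSpace ℝ (Fin 2) → ℝ)
    (hW : ∀ k (p : EuclideanSpace ℝ (Fin 2)), W k p = ∑ j ∈ Finset.Icc 1 k, ‖p - q j‖) :
    (∀ k, 4 ≤ k → Even k →
      (∀ y : EuclideanSpace ℝ (Fin 2), W k (pt 0 0) ≤ W k y) ∧
      (∀ x : EuclideanSpace ℝ (Fin 2), (∀ y, W k x ≤ W k y) → x = pt 0 0)) ∧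
    (∀ k, 5 ≤ k → Odd k →
      (∀ y : EuclideanSpace ℝ (Fin 2), W k (pt 0 (1 / Real.sqrt 3)) ≤ W k y) ∧
      (∀ x : EuclideanSpace ℝ (Fin 2), (∀ y, W k x ≤ W k y) → x = pt 0 (1 / Real.sqrt 3))) ∧
    (∀ FT : ℕ → EuclideanSpace ℝ (Fin 2),
      (∀ k, 4 ≤ k → ∀ y : EuclideanSpace ℝ (Fin 2), W k (FT k) ≤ W k y) →
      ¬ ∃ L : EuclideanSpace ℝ (Fin 2), Tendsto FT atTop (nhds L)) := by
  have hodd : ∀ k, 5 ≤ k → Odd k → q k = q 3 := fun k hk h => (hqodd k hk h).trans hq3.symm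
  have heven : ∀ k, 5 ≤ k → Even k → q k = q 4 := fun k hk h => (hqeven k hk h).trans hq4.symm
  have hminimizer : ∀ k x, 3 ≤ k → weberGradient (Icc 1 k) q x = 0 →
      LinearIndependent ℝ ![x - q 1, x - q 3] →
      (∀ y, W k x ≤ W k y) ∧ ∀ p, (∀ y, W k p ≤ W k y) → p = x := by
    intro k x hk hx hind
    simp only [hW]
    exact ⟨sum_norm_sub_le_of_weberGradient_eq_zero _ q hx, fun p hp =>
      eq_of_weberGradient_eq_zero _ q hx (by simp; omega) (by simp; omega) hind (hp x)⟩
  have hEven : ∀ k, 4 ≤ k → Even k → (∀ y, W k (pt 0 0) ≤ W k y) ∧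
      ∀ x, (∀ y, W k x ≤ W k y) → x = pt 0 0 := by
    rintro k hk ⟨m, rfl⟩
    obtain ⟨n, hn⟩ : ∃ n, m + m = 2 * n + 4 := ⟨m - 2, by omega⟩
    refine hminimizer _ _ (by omega)
      (hn ▸ weberGradient_Icc_two_mul_add_four hq1 hq2 hq3 hq4 hodd heven n) ?_
    rw [hq1, hq3, pt_sub_pt, pt_sub_pt, sub_self]
    exact linearIndependent_pt_pt (by norm_num) (by norm_num)
  have hOdd : ∀ k, 5 ≤ k → Odd k → (∀ y, W k (pt 0 (1 / √3)) ≤ W k y) ∧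
      ∀ x, (∀ y, W k x ≤ W k y) → x = pt 0 (1 / √3) := by
    rintro k hk ⟨m, rfl⟩
    obtain ⟨n, hn⟩ : ∃ n, 2 * m + 1 = 2 * n + 5 := ⟨m - 2, by omega⟩
    refine hminimizer _ _ (by omega)
      (hn ▸ weberGradient_Icc_two_mul_add_five hq1 hq2 hq3 hq4 hodd heven n) ?_
    rw [hq1, hq3, pt_sub_pt, pt_sub_pt, sub_self]
    exact linearIndependent_pt_pt (by norm_num) (sub_ne_zero.mpr one_div_sqrt_three_lt_one.ne)
  refine ⟨hEven, hOdd, fun FT hFT ⟨L, hL⟩ => ?_⟩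
  have hL₀ : L = pt 0 0 := tendsto_nhds_unique_of_frequently_eq hL tendsto_const_nhds <|
    frequently_atTop.2 fun a => ⟨2 * a + 4, by omega,
      (hEven _ (by omega) ⟨a + 2, by ring⟩).2 _ (hFT _ (by omega))⟩
  have hL₁ : L = pt 0 (1 / √3) := tendsto_nhds_unique_of_frequently_eq hL tendsto_const_nhds <|
    frequently_atTop.2 fun a => ⟨2 * a + 5, by omega,
      (hOdd _ (by omega) ⟨a + 2, by ring⟩).2 _ (hFT _ (by omega))⟩
  have h : (0 : ℝ) = 1 / √3 := by simpa using congrArg (· 1) (hL₀.symm.trans hL₁)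
  exact (by positivity : (0 : ℝ) < 1 / √3).ne h
end
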